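/- arXiv:2406.04132 — 2 statements merged into one kernel-verified Lean document; each statement's English description precedes it below -/
import Mathlib

section
/- Let G be a finitely generated group and let 𝒢₁, …, 𝒢ₙ be realizable families of subgroups of G. Then the subgroup-wise intersection 𝒢₁ ⊓ … ⊓ 𝒢ₙ = {H₁ ∩ … ∩ Hₙ : Hᵢ ∈ 𝒢ᵢ for each i} is realizable. -/
section SymbolicDynamics

variable {G : Type} [Group G] {A : Type}

/-- The left shift action of `G` on configurations `G → A`: `(g · x) h = x (g⁻¹ h)`. -/
def shiftAct (g : G) (x : G → A) : G → A := fun h => x (g⁻¹ * h)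

/-- A pattern: a finite support together with a map assigning letters. -/
abbrev Pattern (G A : Type) := Finset G × (G → A)

/-- A pattern `p` appears in a configuration `x` if some translate of `x` agrees with `p`
on its support. -/
def Appears (p : Pattern G A) (x : G → A) : Prop :=
  ∃ g : G, ∀ h ∈ p.1, x (g * h) = p.2 h

/-- The set of configurations avoiding every pattern in `𝓕`. -/
def shiftSpace (𝓕 : Set (Pattern G A)) : Set (G → A) :=
  {x | ∀ p ∈ 𝓕, ¬ Appears p x}

/-- A subshift: a set of configurations defined by a set of forbidden patterns. -/
def IsSubshift (X : Set (G → A)) : Prop :=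
  ∃ 𝓕 : Set (Pattern G A), X = shiftSpace 𝓕

/-- A subshift of finite type: defined by a finite set of forbidden patterns. -/
def IsSFT (X : Set (G → A)) : Prop :=
  ∃ 𝓕 : Set (Pattern G A), 𝓕.Finite ∧ X = shiftSpace 𝓕

/-- The stabilizer of a configuration under the shift action. -/
def stab (x : G → A) : Subgroup G where
  carrier := {g | shiftAct g x = x}
  one_mem' := by
    show shiftAct 1 x = x
    funext h; simp [shiftAct]
  mul_mem' := by
    intro a b ha hb
    have ha' : shiftAct a x = x := ha
    have hb' : shiftAct b x = x := hb
    show shiftAct (a * b) x = x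
    funext h
    have h1 := congrFun hb' (a⁻¹ * h)
    have h2 := congrFun ha' h
    simp only [shiftAct] at h1 h2 ⊢
    rw [show (a * b)⁻¹ * h = b⁻¹ * (a⁻¹ * h) by rw [mul_inv_rev, mul_assoc], h1, h2]
  inv_mem' := by
    intro a ha
    have ha' : shiftAct a x = x := ha
    show shiftAct a⁻¹ x = x
    funext h
    have h1 := congrFun ha' (a * h)
    simp only [shiftAct] at h1 ⊢
    simp only [inv_inv]
    rw [← h1, inv_mul_cancel_left]

/-- The orbit of a configuration under the shift action. -/
def orbitSet (x : G → A) : Set (G → A) := Set.range fun g => shiftAct g x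

/-- A subshift is weakly aperiodic if every configuration has an infinite orbit. -/
def WeaklyAperiodic (X : Set (G → A)) : Prop := ∀ x ∈ X, (orbitSet x).Infinite

/-- A subshift is strongly aperiodic if every configuration has trivial stabilizer. -/
def StronglyAperiodic (X : Set (G → A)) : Prop := ∀ x ∈ X, stab x = ⊥

/-- A family of subgroups of `G` is realizable if it is the set of stabilizers of a
nonempty `G`-SFT over some nonempty finite alphabet. -/
def Realizable (𝒢 : Set (Subgroup G)) : Prop :=
  ∃ (A : Type) (_ : Finite A) (_ : Nonempty A) (X : Set (G → A)),
    IsSFT X ∧ X.Nonempty ∧ stab '' X = 𝒢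

end SymbolicDynamics

/-- A group is periodically rigid if every nonempty weakly aperiodic SFT on it is
strongly aperiodic. -/
def PeriodicallyRigid (G : Type) [Group G] : Prop :=
  ∀ (A : Type) (_ : Finite A) (_ : Nonempty A) (X : Set (G → A)),
    IsSFT X → X.Nonempty → WeaklyAperiodic X → StronglyAperiodic X

/-- A group is virtually `ℤ` if it has a finite-index subgroup isomorphic to `ℤ`. -/
def VirtuallyZ (G : Type) [Group G] : Prop :=
  ∃ H : Subgroup G, H.FiniteIndex ∧ Nonempty (H ≃* Multiplicative ℤ)

/-- A group is virtually `ℤ²` if it has a finite-index subgroup isomorphic to `ℤ²`. -/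
def VirtuallyZ2 (G : Type) [Group G] : Prop :=
  ∃ H : Subgroup G, H.FiniteIndex ∧ Nonempty (H ≃* Multiplicative (ℤ × ℤ))


section Aux

variable {G : Type} [Group G]

lemma mem_stab_iff {A : Type} (x : G → A) (g : G) :
    g ∈ stab x ↔ shiftAct g x = x := Iff.rfl

lemma stab_pi {n : ℕ} {A : Fin n → Type} (x : G → ∀ i, A i) :
    stab x = ⨅ i, stab (fun g => x g i) := by
  ext g
  simp only [Subgroup.mem_iInf, mem_stab_iff]
  constructor
  · intro hg i
    funext h
    exact congrFun (congrFun hg h) i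
  · intro hg
    funext h
    funext i
    exact congrFun (hg i) h

end Aux

/-- The subgroup-wise intersection of finitely many realizable families
of subgroups is realizable. -/
theorem statement12 {G : Type} [Group G] [Group.FG G] (n : ℕ) (hn : 0 < n)
    (𝒢 : Fin n → Set (Subgroup G)) (h : ∀ i, Realizable (𝒢 i)) :
    Realizable {H : Subgroup G | ∃ f : Fin n → Subgroup G,
      (∀ i, f i ∈ 𝒢 i) ∧ H = ⨅ i, f i} := by
  classical
  choose A fA nA X hSFT hne hstab using h
  haveI : ∀ i, Finite (A i) := fA
  haveI : ∀ i, Nonempty (A i) := nA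
  choose 𝓕 h𝓕fin h𝓕 using hSFT
  set AA := (∀ i, A i) with hAA
  let d : AA := Classical.arbitrary AA
  -- lifted forbidden patterns
  let 𝓕' : Set (Pattern G AA) :=
    {P | ∃ i, ∃ p ∈ 𝓕 i, P.1 = p.1 ∧ (∀ h ∈ p.1, P.2 h i = p.2 h) ∧
      ∀ h ∉ p.1, P.2 h = d}
  -- finiteness
  have hSfin : ∀ F : Finset G,
      Set.Finite {P : Pattern G AA | P.1 = F ∧ ∀ h ∉ F, P.2 h = d} := by
    intro F
    have hinj : Set.InjOn (fun P : Pattern G AA => (fun h : F => P.2 h))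
        {P : Pattern G AA | P.1 = F ∧ ∀ h ∉ F, P.2 h = d} := by
      rintro ⟨F1, q1⟩ ⟨hF1, hq1⟩ ⟨F2, q2⟩ ⟨hF2, hq2⟩ heq
      simp only at hF1 hq1 hF2 hq2
      refine Prod.ext (hF1.trans hF2.symm) ?_
      show q1 = q2
      funext h'
      by_cases hh : h' ∈ F
      · exact congrFun heq ⟨h', hh⟩
      · rw [hq1 h' hh, hq2 h' hh]
    exact Set.Finite.of_finite_image (Set.toFinite _) hinj
  have h𝓕'fin : 𝓕'.Finite := by
    have hsub : 𝓕' ⊆ ⋃ i, ⋃ p ∈ 𝓕 i,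
        {P : Pattern G AA | P.1 = p.1 ∧ ∀ h ∉ p.1, P.2 h = d} := by
      rintro P ⟨i, p, hp, h1, _, h3⟩
      exact Set.mem_iUnion.2 ⟨i, Set.mem_biUnion hp ⟨h1, h3⟩⟩
    exact Set.Finite.subset
      (Set.finite_iUnion fun i => Set.Finite.biUnion (h𝓕fin i) fun p _ => hSfin p.1) hsub
  -- the product subshift
  let X' : Set (G → AA) := shiftSpace 𝓕'
  have hmem : ∀ x : G → AA, x ∈ X' ↔ ∀ i, (fun g => x g i) ∈ shiftSpace (𝓕 i) := by
    intro x
    constructor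
    · intro hx i p hp ⟨g, hg⟩
      refine hx (p.1, fun h => if h ∈ p.1 then x (g * h) else d)
        ⟨i, p, hp, rfl, ?_, ?_⟩ ⟨g, ?_⟩
      · intro h hh
        simp only [if_pos hh]
        exact hg h hh
      · intro h hh
        simp only [if_neg hh]
      · intro h hh
        simp only [if_pos hh]
    · rintro hx P ⟨i, p, hp, h1, h2, _⟩ ⟨g, hg⟩
      refine hx i p hp ⟨g, fun h hh => ?_⟩
      have := congrFun (hg h (h1 ▸ hh)) i
      show x (g * h) i = p.2 h
      exact this.trans (h2 h hh)
  -- nonempty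
  have hne' : X'.Nonempty := by
    choose y hy using hne
    refine ⟨fun g i => y i g, (hmem _).2 fun i => ?_⟩
    rw [← h𝓕 i]; exact hy i
  refine ⟨AA, inferInstance, inferInstance, X', ⟨𝓕', h𝓕'fin, rfl⟩, hne', ?_⟩
  ext H
  constructor
  · rintro ⟨x, hx, rfl⟩
    refine ⟨fun i => stab (fun g => x g i), fun i => ?_, stab_pi x⟩
    rw [← hstab i]
    exact ⟨_, (h𝓕 i) ▸ (hmem x).1 hx i, rfl⟩
  · rintro ⟨f, hf, rfl⟩
    have : ∀ i, ∃ y ∈ X i, stab y = f i := by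
      intro i
      have := hf i
      rw [← hstab i] at this
      obtain ⟨y, hy, hy'⟩ := this
      exact ⟨y, hy, hy'⟩
    choose y hy hy' using this
    refine ⟨fun g i => y i g, (hmem _).2 fun i => ?_, ?_⟩
    · rw [← h𝓕 i]; exact hy i
    · rw [stab_pi]
      exact iInf_congr hy'
end

section
/- Let G be a finitely generated group, H a finitely generated torsion-free subgroup of G that admits a nonempty weakly aperiodic H-SFT, and suppose there exists an element g ∈ G \ H of finite order. Then G is not periodically rigid: there exists a nonempty weakly aperiodic G-SFT that is not strongly aperiodic. -/
section AuxLemmas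

variable {G : Type} [Group G] {A : Type}

lemma shiftSpace_shiftAct {𝓕 : Set (Pattern G A)} {x : G → A} (hx : x ∈ shiftSpace 𝓕)
    (k : G) : shiftAct k x ∈ shiftSpace 𝓕 := by
  rintro p hp ⟨a, ha⟩
  refine hx p hp ⟨k⁻¹ * a, fun h hh => ?_⟩
  simpa [shiftAct, mul_assoc] using ha h hh

/-- Restriction of a `G`-configuration to the coset `aH`, viewed as an `H`-configuration. -/
def restrH (H : Subgroup G) (x : G → A) (a : G) : H → A := fun h => x (a * h)

end AuxLemmas

/-- If a finitely generated group `G` has a finitely generated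
torsion-free subgroup `H` admitting a nonempty weakly aperiodic SFT, and `G` contains an
element of finite order outside `H`, then `G` is not periodically rigid. -/
theorem statement14 {G : Type} [Group G] [Group.FG G] (H : Subgroup G) (hfg : H.FG)
    (htf : ∀ g : H, g ≠ 1 → ¬IsOfFinOrder g)
    (hwa : ∃ (A : Type) (_ : Finite A) (_ : Nonempty A) (X : Set (H → A)),
        IsSFT X ∧ X.Nonempty ∧ WeaklyAperiodic X)
    (g : G) (hg : g ∉ H) (hord : IsOfFinOrder g) :
    ∃ (A : Type) (_ : Finite A) (_ : Nonempty A) (X : Set (G → A)),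
      IsSFT X ∧ X.Nonempty ∧ WeaklyAperiodic X ∧ ¬ StronglyAperiodic X := by
  classical
  obtain ⟨A, hfinA, hneA, X, ⟨𝓕, h𝓕, hX⟩, ⟨x₀, hx₀⟩, hWA⟩ := hwa
  subst hX
  haveI : Inhabited A := Classical.inhabited_of_nonempty hneA
  -- the induced forbidden patterns on G
  set F : Pattern H A → Pattern G A := fun p =>
    (p.1.image (fun h : H => (h : G)),
      fun a : G => if ha : a ∈ H then p.2 ⟨a, ha⟩ else default) with hF
  set 𝓕G : Set (Pattern G A) := F '' 𝓕 with h𝓕G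
  -- membership in the induced subshift in terms of coset restrictions
  have hmem : ∀ x : G → A, x ∈ shiftSpace 𝓕G ↔
      ∀ a : G, restrH H x a ∈ shiftSpace 𝓕 := by
    intro x
    constructor
    · rintro hx a p hp ⟨k, hk⟩
      refine hx (F p) ⟨p, hp, rfl⟩ ⟨a * (k : G), ?_⟩
      rintro b hb
      simp only [hF, Finset.mem_image] at hb
      obtain ⟨h, hh, rfl⟩ := hb
      have := hk h hh
      simp only [restrH] at this
      have hco : ((h : H) : G) ∈ H := (h : H).2
      simp only [hF]
      rw [dif_pos hco]
      have : x (a * ((k * h : H) : G)) = p.2 h := this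
      simpa [mul_assoc] using this
    · rintro hx p' ⟨p, hp, rfl⟩ ⟨b, hb⟩
      refine hx b p hp ⟨1, fun h hh => ?_⟩
      have := hb (h : G) (Finset.mem_image_of_mem _ hh)
      simp only [hF, dif_pos (h : H).2] at this
      simp only [restrH]
      simpa using this
  -- the subgroup generated by g, acting on G/H
  set C := Subgroup.zpowers g with hC
  have hγ : g ∈ C := Subgroup.mem_zpowers g
  have hCord : ∀ c : C, IsOfFinOrder (c : G) := by
    rintro ⟨c, hc⟩
    obtain ⟨n, rfl⟩ := Subgroup.mem_zpowers_iff.mp hc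
    exact hord.zpow
  -- the action of C on G/H is free since H is torsion-free
  have hfree : ∀ (c : C) (q : G ⧸ H), c • q = q → c = 1 := by
    intro c q hcq
    have hq : (QuotientGroup.mk q.out : G ⧸ H) = q := QuotientGroup.out_eq' q
    rw [← hq] at hcq
    have hcq' : (QuotientGroup.mk ((c : G) * q.out) : G ⧸ H) = QuotientGroup.mk q.out := hcq
    have hd : ((c : G) * q.out)⁻¹ * q.out ∈ H := QuotientGroup.eq.mp hcq'
    set d : G := ((c : G) * q.out)⁻¹ * q.out with hddef
    have hdeq : d = q.out⁻¹ * (c : G)⁻¹ * (q.out⁻¹)⁻¹ := by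
      simp [hddef, mul_inv_rev, mul_assoc]
    have hdo : IsOfFinOrder d := by
      obtain ⟨n, hn, hcn⟩ := isOfFinOrder_iff_pow_eq_one.mp (hCord c⁻¹)
      refine isOfFinOrder_iff_pow_eq_one.mpr ⟨n, hn, ?_⟩
      rw [hdeq, conj_pow]
      have : ((c⁻¹ : C) : G) ^ n = 1 := hcn
      simp only [Subgroup.coe_inv] at this
      rw [this]
      simp
    have hdH : IsOfFinOrder (⟨d, hd⟩ : H) := by
      rw [← Submonoid.isOfFinOrder_coe]
      exact hdo
    have hd1 : (⟨d, hd⟩ : H) = 1 := by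
      by_contra hne
      exact htf ⟨d, hd⟩ hne hdH
    have hdg1 : d = 1 := congrArg Subtype.val hd1
    have : (c : G)⁻¹ = 1 := by
      have := hdg1
      rw [hdeq] at this
      have h2 : q.out * (q.out⁻¹ * (c : G)⁻¹ * (q.out⁻¹)⁻¹) * q.out⁻¹ = q.out * 1 * q.out⁻¹ := by
        rw [this]
      simpa [mul_assoc] using h2
    ext
    simpa using inv_eq_one.mp this
  have hfree2 : ∀ (c c' : C) (q : G ⧸ H), c • q = c' • q → c = c' := by
    intro c c' q h
    have : (c'⁻¹ * c) • q = q := by rw [mul_smul, h, inv_smul_smul]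
    have := hfree _ _ this
    exact (inv_mul_eq_one.mp this).symm
  -- choose orbit representatives for the C-action on G/H
  set S : Setoid (G ⧸ H) := MulAction.orbitRel C (G ⧸ H) with hS
  set rep : G ⧸ H → G ⧸ H := fun q => (Quotient.mk S q).out with hrepdef
  have hrep : ∀ q, ∃ c : C, c • q = rep q := by
    intro q
    exact MulAction.mem_orbit_iff.mp (Quotient.exact (Quotient.out_eq (Quotient.mk S q)))
  have hrepc : ∀ (c : C) (q : G ⧸ H), rep (c • q) = rep q := by
    intro c q
    have : Quotient.mk S (c • q) = Quotient.mk S q :=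
      Quotient.sound (MulAction.mem_orbit_iff.mpr ⟨c, rfl⟩)
    show (Quotient.mk S (c • q)).out = (Quotient.mk S q).out
    rw [this]
  set coef : G ⧸ H → C := fun q => (Classical.choose (hrep q))⁻¹ with hcoefdef
  have hcoef : ∀ q, coef q • rep q = q := by
    intro q
    have h := Classical.choose_spec (hrep q)
    show (Classical.choose (hrep q))⁻¹ • rep q = q
    exact inv_smul_eq_iff.mpr h.symm
  set T : G ⧸ H → G := fun q => (coef q : G) * (rep q).out with hTdef
  have hT : ∀ q, (QuotientGroup.mk (T q) : G ⧸ H) = q := by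
    intro q
    have h1 : (QuotientGroup.mk (T q) : G ⧸ H) = coef q • QuotientGroup.mk (rep q).out := rfl
    rw [h1, QuotientGroup.out_eq', hcoef]
  have hTH : ∀ k : G, (T (QuotientGroup.mk k))⁻¹ * k ∈ H := by
    intro k
    exact QuotientGroup.eq.mp (hT (QuotientGroup.mk k))
  -- the periodic configuration
  set xh : G → A := fun k => x₀ ⟨(T (QuotientGroup.mk k))⁻¹ * k, hTH k⟩ with hxhdef
  -- xh belongs to the induced subshift
  have hxhY : xh ∈ shiftSpace 𝓕G := by
    rw [hmem]
    intro a
    set u : H := ⟨(T (QuotientGroup.mk a))⁻¹ * a, hTH a⟩ with hu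
    have : restrH H xh a = shiftAct u⁻¹ x₀ := by
      funext h
      have hq : (QuotientGroup.mk (a * (h : G)) : G ⧸ H) = QuotientGroup.mk a :=
        QuotientGroup.mk_mul_of_mem a h.2
      show x₀ ⟨(T (QuotientGroup.mk (a * (h : G))))⁻¹ * (a * (h : G)), hTH _⟩
          = x₀ ((u⁻¹)⁻¹ * h)
      rw [inv_inv]
      refine congrArg x₀ (Subtype.ext ?_)
      show (T (QuotientGroup.mk (a * (h : G))))⁻¹ * (a * (h : G))
          = ((T (QuotientGroup.mk a))⁻¹ * a) * (h : G)
      rw [hq, mul_assoc]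
    rw [this]
    exact shiftSpace_shiftAct hx₀ _
  -- xh is g-periodic
  have hper : shiftAct g xh = xh := by
    funext k
    set q : G ⧸ H := QuotientGroup.mk k with hq
    set γ : C := ⟨g, hγ⟩ with hγ'
    have hmk : (QuotientGroup.mk (g⁻¹ * k) : G ⧸ H) = γ⁻¹ • q := rfl
    have hrepeq : rep (γ⁻¹ • q) = rep q := hrepc γ⁻¹ q
    have hcoefeq : coef (γ⁻¹ • q) = γ⁻¹ * coef q := by
      refine hfree2 _ _ (rep q) ?_
      rw [← hrepeq, hcoef, hrepeq, mul_smul, hcoef]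
    have hTeq : T (γ⁻¹ • q) = g⁻¹ * T q := by
      show (coef (γ⁻¹ • q) : G) * (rep (γ⁻¹ • q)).out = g⁻¹ * ((coef q : G) * (rep q).out)
      rw [hrepeq, hcoefeq]
      have : ((γ⁻¹ * coef q : C) : G) = g⁻¹ * (coef q : G) := rfl
      rw [this, mul_assoc]
    show xh (g⁻¹ * k) = xh k
    have harg : (T (QuotientGroup.mk (g⁻¹ * k)))⁻¹ * (g⁻¹ * k)
        = (T (QuotientGroup.mk k))⁻¹ * k := by
      rw [show (QuotientGroup.mk (g⁻¹ * k) : G ⧸ H) = γ⁻¹ • q from hmk, hTeq]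
      group
      rfl
    exact congrArg x₀ (Subtype.ext harg)
  -- conclusion
  refine ⟨A, hfinA, hneA, shiftSpace 𝓕G, ⟨𝓕G, h𝓕.image F, rfl⟩, ⟨xh, hxhY⟩, ?_, ?_⟩
  · -- weak aperiodicity
    intro x hxY
    have hy : restrH H x 1 ∈ shiftSpace 𝓕 := (hmem x).mp hxY 1
    have hinf : (orbitSet (restrH H x 1)).Infinite := hWA _ hy
    have hsub : orbitSet (restrH H x 1) ⊆ (fun z : G → A => restrH H z 1) '' orbitSet x := by
      rintro y ⟨k, rfl⟩
      refine ⟨shiftAct (k : G) x, ⟨(k : G), rfl⟩, ?_⟩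
      funext h
      simp [restrH, shiftAct]
    exact Set.Infinite.of_image _ (hinf.mono hsub)
  · -- not strongly aperiodic
    intro hSA
    have hst := hSA xh hxhY
    have hgst : g ∈ stab xh := hper
    rw [hst, Subgroup.mem_bot] at hgst
    exact hg (hgst ▸ H.one_mem)
end
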